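/- Let P be a symmetric positive definite n_u × n_u matrix with eigenvalue bounds λmin(P), λmax(P), and ‖a‖_P := √(aᵀPa). Let ε ∈ (0,1], c_T ∈ (0,1), ℓ_T, ℓ_g, ℓ_{u*} > 0, α₁ > 0, and let: T : ℝ^{n_u} × ℝ^{n_y} → ℝ^{n_u} with ‖T(u,y) − T(u,y')‖ ≤ ℓ_T‖y − y'‖; g with ‖g(x,w) − g(x',w)‖ ≤ ℓ_g‖x − x'‖; h(u,w) := g(x_ss(u,w), w); T̃(u,w) := T(u, h(u,w)); u* with u*(w) = T̃(u*(w), w), ‖T̃(u,w) − u*(w)‖_P ≤ c_T‖u − u*(w)‖_P, and ‖u*(w') − u*(w)‖ ≤ ℓ_{u*}‖w' − w‖; and V with α₁‖x − x_ss(u,w)‖² ≤ V(x,u,w), W := √V. If u^{k+1} = (1−ε)u^k + ε·T(u^k, y^{k+1}) with y^{k+1} = g(x^{k+1}, w^{k+1}), then ‖u^{k+1} − u^k‖ ≤ ε·(1 + c_T)·λmin(P)^{-1/2}·(‖u^k − u*(w^k)‖_P + √(λmax(P))·ℓ_{u*}·‖w^{k+1} − w^k‖) + ε·(ℓ_T·ℓ_g/√α₁)·W(x^{k+1},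 u^k, w^{k+1}). -/

import Mathlib

/-!
The increment `u^{k+1} - u^k` is `ε` times `T(u^k, y^{k+1}) - u^k`. Inserting the steady-state
output `T̃(u^k, w^{k+1}) = T(u^k, h(u^k, w^{k+1}))` splits it into a state part, bounded through
the Lipschitz constants of `T` and `g` and `α₁ ‖x - x_ss‖² ≤ V`, and a steady-state part. The
latter is measured in `‖·‖_P`: the contraction gives `‖T̃(u) - u‖_P ≤ (1 + c_T) ‖u - u*(w^{k+1})‖_P`,
and moving `u*` from `w^{k+1}` back to `w^k` costs `√λmax(P) ℓ_{u*} ‖w^{k+1} - w^k‖`. The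
eigenvalue bounds `λmin ‖a‖² ≤ aᵀPa ≤ λmax ‖a‖²` convert between the two norms.
-/

/-- Largest eigenvalue of a Hermitian (symmetric) real matrix. -/
noncomputable def eigMax {n : ℕ} {P : Matrix (Fin n) (Fin n) ℝ} (hP : P.IsHermitian) : ℝ :=
  ⨆ i, hP.eigenvalues i

/-- Smallest eigenvalue of a Hermitian (symmetric) real matrix. -/
noncomputable def eigMin {n : ℕ} {P : Matrix (Fin n) (Fin n) ℝ} (hP : P.IsHermitian) : ℝ :=
  ⨅ i, hP.eigenvalues i

/-- The `P`-weighted norm `‖a‖_P = √(aᵀ P a)`. -/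
noncomputable def pnorm {n : ℕ} (P : Matrix (Fin n) (Fin n) ℝ) (a : EuclideanSpace ℝ (Fin n)) : ℝ :=
  Real.sqrt (dotProduct (fun i => a i) (P.mulVec fun i => a i))

open Matrix
open scoped RealInnerProductSpace

section PNorm

variable {n : ℕ} {P : Matrix (Fin n) (Fin n) ℝ}

theorem Matrix.IsHermitian.dotProduct_mulVec_eq_sum_eigenvalues (hP : P.IsHermitian)
    (a : EuclideanSpace ℝ (Fin n)) :
    a ⬝ᵥ (P *ᵥ a) = ∑ j, hP.eigenvalues j * ⟪hP.eigenvectorBasis j, a⟫ ^ 2 := by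
  set b := hP.eigenvectorBasis
  have hb : ∀ j, ⟪b j, toEuclideanLin P a⟫ = hP.eigenvalues j * ⟪b j, a⟫ := fun j => by
    rw [← isSymmetric_toEuclideanLin_iff.mpr hP, toLpLin_apply, hP.mulVec_eigenvectorBasis,
      WithLp.toLp_smul, WithLp.toLp_ofLp, inner_smul_left]
    rfl
  calc a ⬝ᵥ (P *ᵥ a) = ⟪a, toEuclideanLin P a⟫ := dotProduct_comm _ _
    _ = _ := by
      rw [← b.sum_inner_mul_inner]
      congr! 1 with j
      rw [hb, real_inner_comm]
      ring

theorem eigMin_mul_norm_sq_le_dotProduct_mulVec (hP : P.IsHermitian)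
    (a : EuclideanSpace ℝ (Fin n)) : eigMin hP * ‖a‖ ^ 2 ≤ a ⬝ᵥ (P *ᵥ a) := by
  rw [hP.dotProduct_mulVec_eq_sum_eigenvalues, ← hP.eigenvectorBasis.sum_sq_inner_right,
    Finset.mul_sum]
  gcongr with j
  exact ciInf_le (Set.finite_range _).bddBelow j

theorem dotProduct_mulVec_le_eigMax_mul_norm_sq (hP : P.IsHermitian)
    (a : EuclideanSpace ℝ (Fin n)) : a ⬝ᵥ (P *ᵥ a) ≤ eigMax hP * ‖a‖ ^ 2 := by
  rw [hP.dotProduct_mulVec_eq_sum_eigenvalues, ← hP.eigenvectorBasis.sum_sq_inner_right,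
    Finset.mul_sum]
  gcongr with j
  exact le_ciSup (Set.finite_range _).bddAbove j

theorem eigMin_pos [NeZero n] (hP : P.PosDef) : 0 < eigMin hP.1 := by
  obtain ⟨j, hj⟩ := Finite.exists_min hP.1.eigenvalues
  exact (hP.eigenvalues_pos j).trans_le (le_ciInf hj)

theorem sqrt_eigMin_mul_norm_le_pnorm (hP : P.IsHermitian) (a : EuclideanSpace ℝ (Fin n)) :
    √(eigMin hP) * ‖a‖ ≤ pnorm P a := by
  rw [← Real.sqrt_sq (norm_nonneg a), ← Real.sqrt_mul' _ (sq_nonneg _)]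
  exact Real.sqrt_le_sqrt (eigMin_mul_norm_sq_le_dotProduct_mulVec hP a)

theorem pnorm_le_sqrt_eigMax_mul_norm (hP : P.IsHermitian) (a : EuclideanSpace ℝ (Fin n)) :
    pnorm P a ≤ √(eigMax hP) * ‖a‖ := by
  rw [← Real.sqrt_sq (norm_nonneg a), ← Real.sqrt_mul' _ (sq_nonneg _)]
  exact Real.sqrt_le_sqrt (dotProduct_mulVec_le_eigMax_mul_norm_sq hP a)

theorem norm_le_inv_sqrt_eigMin_mul_pnorm (hP : P.PosDef) (a : EuclideanSpace ℝ (Fin n)) :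
    ‖a‖ ≤ (√(eigMin hP.1))⁻¹ * pnorm P a := by
  rcases eq_zero_or_neZero n with rfl | _
  · simp [Subsingleton.elim a 0, pnorm]
  · rw [← div_eq_inv_mul, le_div_iff₀' (Real.sqrt_pos.2 (eigMin_pos hP))]
    exact sqrt_eigMin_mul_norm_le_pnorm hP.1 a

open scoped MatrixOrder in
theorem pnorm_eq_norm_toEuclideanLin_sqrt (hP : P.PosSemidef) (a : EuclideanSpace ℝ (Fin n)) :
    pnorm P a = ‖toEuclideanLin (CFC.sqrt P) a‖ := by
  have hsymm : (CFC.sqrt P)ᵀ = CFC.sqrt P := by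
    simpa [Matrix.IsHermitian] using (CFC.sqrt_nonneg P).posSemidef.1
  rw [pnorm, EuclideanSpace.norm_eq]
  congr 1
  conv_lhs => rw [← CFC.sqrt_mul_sqrt_self P hP.nonneg, ← mulVec_mulVec, dotProduct_mulVec,
    ← mulVec_transpose, hsymm]
  simp [dotProduct, pow_two]

theorem pnorm_sub_le_pnorm_sub_add_pnorm_sub (hP : P.PosSemidef)
    (a b c : EuclideanSpace ℝ (Fin n)) : pnorm P (a - c) ≤ pnorm P (a - b) + pnorm P (b - c) := by
  simp only [pnorm_eq_norm_toEuclideanLin_sqrt hP, map_sub]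
  exact norm_sub_le_norm_sub_add_norm_sub _ _ _

theorem pnorm_sub_rev (hP : P.PosSemidef) (a b : EuclideanSpace ℝ (Fin n)) :
    pnorm P (a - b) = pnorm P (b - a) := by
  simp only [pnorm_eq_norm_toEuclideanLin_sqrt hP, map_sub]
  exact norm_sub_rev _ _

theorem pnorm_sub_le_one_add_mul_of_pnorm_sub_le (hP : P.PosSemidef)
    {t u u' : EuclideanSpace ℝ (Fin n)} {c : ℝ} (h : pnorm P (t - u') ≤ c * pnorm P (u - u')) :
    pnorm P (t - u) ≤ (1 + c) * pnorm P (u - u') := by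
  have := pnorm_sub_le_pnorm_sub_add_pnorm_sub hP t u' u
  rw [pnorm_sub_rev hP u' u] at this
  linarith

end PNorm

theorem le_sqrt_div_sqrt_of_mul_sq_le {r α V : ℝ} (hr : 0 ≤ r) (hα : 0 < α) (h : α * r ^ 2 ≤ V) :
    r ≤ √V / √α := by
  rw [← Real.sqrt_div' V hα.le, ← abs_of_nonneg hr]
  exact Real.abs_le_sqrt (by rwa [le_div_iff₀' hα])

theorem stmt7_general {nx nu nw ny : ℕ}
    (P : Matrix (Fin nu) (Fin nu) ℝ) (hP : P.PosDef)
    (ε cT ℓT ℓg ℓus α₁ : ℝ)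
    (hε0 : 0 < ε) (hcT : cT ∈ Set.Ioo (0:ℝ) 1)
    (hℓT : 0 < ℓT) (hℓg : 0 < ℓg) (hα₁ : 0 < α₁)
    (T : EuclideanSpace ℝ (Fin nu) → EuclideanSpace ℝ (Fin ny) → EuclideanSpace ℝ (Fin nu))
    (hT : ∀ u y y', ‖T u y - T u y'‖ ≤ ℓT * ‖y - y'‖)
    (g : EuclideanSpace ℝ (Fin nx) → EuclideanSpace ℝ (Fin nw) → EuclideanSpace ℝ (Fin ny))
    (hg : ∀ x x' w, ‖g x w - g x' w‖ ≤ ℓg * ‖x - x'‖)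
    (xss : EuclideanSpace ℝ (Fin nu) → EuclideanSpace ℝ (Fin nw) → EuclideanSpace ℝ (Fin nx))
    (ustar : EuclideanSpace ℝ (Fin nw) → EuclideanSpace ℝ (Fin nu))
    (hcontr : ∀ u w,
      pnorm P (T u (g (xss u w) w) - ustar w) ≤ cT * pnorm P (u - ustar w))
    (hustarLip : ∀ w w', ‖ustar w' - ustar w‖ ≤ ℓus * ‖w' - w‖)
    (V : EuclideanSpace ℝ (Fin nx) → EuclideanSpace ℝ (Fin nu) → EuclideanSpace ℝ (Fin nw) → ℝ)
    (hV : ∀ x u w, α₁ * ‖x - xss u w‖^2 ≤ V x u w)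
    (xk1 : EuclideanSpace ℝ (Fin nx)) (uk uk1 : EuclideanSpace ℝ (Fin nu))
    (wk wk1 : EuclideanSpace ℝ (Fin nw))
    (hupd : uk1 = (1-ε) • uk + ε • T uk (g xk1 wk1)) :
    ‖uk1 - uk‖ ≤
      ε * (1 + cT) * (Real.sqrt (eigMin hP.1))⁻¹ *
          (pnorm P (uk - ustar wk) + Real.sqrt (eigMax hP.1) * ℓus * ‖wk1 - wk‖)
        + ε * (ℓT * ℓg / Real.sqrt α₁) * Real.sqrt (V xk1 uk wk1) := by
  set t := T uk (g xk1 wk1)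
  set tss := T uk (g (xss uk wk1) wk1)
  have hstate : ‖t - tss‖ ≤ ℓT * ℓg / √α₁ * √(V xk1 uk wk1) := calc
    ‖t - tss‖ ≤ ℓT * (ℓg * ‖xk1 - xss uk wk1‖) := (hT _ _ _).trans (by gcongr; exact hg _ _ _)
    _ ≤ ℓT * (ℓg * (√(V xk1 uk wk1) / √α₁)) := by
      gcongr; exact le_sqrt_div_sqrt_of_mul_sq_le (norm_nonneg _) hα₁ (hV _ _ _)
    _ = ℓT * ℓg / √α₁ * √(V xk1 uk wk1) := by ring
  have hdrift : pnorm P (uk - ustar wk1) ≤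
      pnorm P (uk - ustar wk) + √(eigMax hP.1) * ℓus * ‖wk1 - wk‖ := calc
    _ ≤ pnorm P (uk - ustar wk) + pnorm P (ustar wk - ustar wk1) :=
      pnorm_sub_le_pnorm_sub_add_pnorm_sub hP.posSemidef _ _ _
    _ ≤ pnorm P (uk - ustar wk) + √(eigMax hP.1) * (ℓus * ‖wk1 - wk‖) := by
      grw [pnorm_le_sqrt_eigMax_mul_norm hP.1 (ustar wk - ustar wk1),
        norm_sub_rev (ustar wk), hustarLip]
    _ = _ := by ring
  have hss : ‖tss - uk‖ ≤ (√(eigMin hP.1))⁻¹ * ((1 + cT) *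
      (pnorm P (uk - ustar wk) + √(eigMax hP.1) * ℓus * ‖wk1 - wk‖)) := by
    grw [norm_le_inv_sqrt_eigMin_mul_pnorm hP,
      pnorm_sub_le_one_add_mul_of_pnorm_sub_le hP.posSemidef (hcontr uk wk1), hdrift]
    linarith [hcT.1]
  have hincr : uk1 - uk = ε • (t - uk) := by rw [hupd]; module
  rw [hincr, norm_smul, Real.norm_of_nonneg hε0.le]
  grw [norm_sub_le_norm_sub_add_norm_sub t tss uk, hstate, hss]
  exact le_of_eq (by ring)

/-- The bound (chain (33), up to step (s.4)) on the one-step control increment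
`‖u^{k+1} - u^k‖` in the proof of Theorem 1. -/
theorem stmt7 {nx nu nw ny : ℕ} (hnu : 0 < nu)
    (P : Matrix (Fin nu) (Fin nu) ℝ) (hP : P.PosDef)
    (ε cT ℓT ℓg ℓus α₁ : ℝ)
    (hε0 : 0 < ε) (hε1 : ε ≤ 1) (hcT : cT ∈ Set.Ioo (0:ℝ) 1)
    (hℓT : 0 < ℓT) (hℓg : 0 < ℓg) (hℓus : 0 < ℓus) (hα₁ : 0 < α₁)
    (T : EuclideanSpace ℝ (Fin nu) → EuclideanSpace ℝ (Fin ny) → EuclideanSpace ℝ (Fin nu))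
    (hT : ∀ u y y', ‖T u y - T u y'‖ ≤ ℓT * ‖y - y'‖)
    (g : EuclideanSpace ℝ (Fin nx) → EuclideanSpace ℝ (Fin nw) → EuclideanSpace ℝ (Fin ny))
    (hg : ∀ x x' w, ‖g x w - g x' w‖ ≤ ℓg * ‖x - x'‖)
    (xss : EuclideanSpace ℝ (Fin nu) → EuclideanSpace ℝ (Fin nw) → EuclideanSpace ℝ (Fin nx))
    (ustar : EuclideanSpace ℝ (Fin nw) → EuclideanSpace ℝ (Fin nu))
    (hfix : ∀ w, ustar w = T (ustar w) (g (xss (ustar w) w) w))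
    (hcontr : ∀ u w,
      pnorm P (T u (g (xss u w) w) - ustar w) ≤ cT * pnorm P (u - ustar w))
    (hustarLip : ∀ w w', ‖ustar w' - ustar w‖ ≤ ℓus * ‖w' - w‖)
    (V : EuclideanSpace ℝ (Fin nx) → EuclideanSpace ℝ (Fin nu) → EuclideanSpace ℝ (Fin nw) → ℝ)
    (hV : ∀ x u w, α₁ * ‖x - xss u w‖^2 ≤ V x u w)
    (xk1 : EuclideanSpace ℝ (Fin nx)) (uk uk1 : EuclideanSpace ℝ (Fin nu))
    (wk wk1 : EuclideanSpace ℝ (Fin nw))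
    (hupd : uk1 = (1-ε) • uk + ε • T uk (g xk1 wk1)) :
    ‖uk1 - uk‖ ≤
      ε * (1 + cT) * (Real.sqrt (eigMin hP.1))⁻¹ *
          (pnorm P (uk - ustar wk) + Real.sqrt (eigMax hP.1) * ℓus * ‖wk1 - wk‖)
        + ε * (ℓT * ℓg / Real.sqrt α₁) * Real.sqrt (V xk1 uk wk1) :=
  stmt7_general P hP ε cT ℓT ℓg ℓus α₁ hε0 hcT hℓT hℓg hα₁ T hT g hg xss ustar hcontr hustarLip V hV
    xk1 uk uk1 wk wk1 hupd
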